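/- arXiv:2205.00441 — 5 statements merged into one kernel-verified Lean document; each statement's English description precedes it below -/
import Mathlib

section
/- Let S be a finite nonempty multiset (or finite family indexed by a finite set) of words in Σ^L, and let o ∈ Σ^L be an origin word for S, meaning that for every position i, the number of words s ∈ S with s i = o i is at least |S| / (2|Σ|). If there exists a word w ∈ S with dist(o, w) > 4|Σ|d, then there is no word c ∈ Σ^L with dist(c, s) ≤ d for all s ∈ S. -/
/-- If an origin word is not good, then the `Closest String` instance has a
negative answer. -/
theorem origin_word_not_good_implies_no_solution
    {A : Type*} [Fintype A] [DecidableEq A] [Nonempty A] {L d n : ℕ}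
    (s : Fin n → (Fin L → A)) (hn : 0 < n)
    (o : Fin L → A)
    (horigin : ∀ i : Fin L,
      (n : ℝ) / (2 * Fintype.card A) ≤
        ((Finset.univ.filter (fun j : Fin n => s j i = o i)).card : ℝ))
    (w : Fin n) (hw : 4 * Fintype.card A * d < hammingDist o (s w)) :
    ¬ ∃ c : Fin L → A, ∀ j : Fin n, hammingDist c (s j) ≤ d := by
  rintro ⟨c, hc⟩
  set k := Fintype.card A with hk
  have hkpos : 0 < k := Fintype.card_pos
  -- the set of positions where c differs from o
  set D : Finset (Fin L) := Finset.univ.filter (fun i => c i ≠ o i) with hD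
  have hDcard : D.card = hammingDist c o := rfl
  -- key: sum over positions of mismatches equals sum of distances
  have key : ∑ i : Fin L, ((Finset.univ.filter (fun j : Fin n => c i ≠ s j i)).card)
      = ∑ j : Fin n, hammingDist c (s j) := by
    simp only [hammingDist, Finset.card_filter]
    rw [Finset.sum_comm]
  have hsum_le : ∑ j : Fin n, hammingDist c (s j) ≤ n * d := by
    calc ∑ j : Fin n, hammingDist c (s j) ≤ ∑ _j : Fin n, d :=
          Finset.sum_le_sum (fun j _ => hc j)
      _ = n * d := by simp [Finset.sum_const, mul_comm]
  -- for each i in D, many words disagree with c at i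
  have hlow : ∀ i ∈ D, (n : ℝ) / (2 * k) ≤
      ((Finset.univ.filter (fun j : Fin n => c i ≠ s j i)).card : ℝ) := by
    intro i hi
    have hne : c i ≠ o i := (Finset.mem_filter.mp hi).2
    refine le_trans (horigin i) ?_
    have hsub : (Finset.univ.filter (fun j : Fin n => s j i = o i)) ⊆
        (Finset.univ.filter (fun j : Fin n => c i ≠ s j i)) := by
      intro j hj
      simp only [Finset.mem_filter, Finset.mem_univ, true_and] at hj ⊢
      rw [hj]; exact hne
    exact_mod_cast Finset.card_le_card hsub
  have hmain : (D.card : ℝ) * ((n : ℝ) / (2 * k)) ≤ (n : ℝ) * d := by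
    calc (D.card : ℝ) * ((n : ℝ) / (2 * k))
        ≤ ∑ i ∈ D, ((Finset.univ.filter (fun j : Fin n => c i ≠ s j i)).card : ℝ) := by
          have h := Finset.card_nsmul_le_sum D
            (fun i => ((Finset.univ.filter (fun j : Fin n => c i ≠ s j i)).card : ℝ))
            ((n : ℝ) / (2 * k)) hlow
          simpa [nsmul_eq_mul, mul_comm] using h
      _ ≤ ∑ i : Fin L, ((Finset.univ.filter (fun j : Fin n => c i ≠ s j i)).card : ℝ) := by
          exact Finset.sum_le_sum_of_subset_of_nonneg (Finset.subset_univ _)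
            (fun _ _ _ => by positivity)
      _ = ((∑ j : Fin n, hammingDist c (s j) : ℕ) : ℝ) := by
          rw [← key]; push_cast; ring
      _ ≤ (n : ℝ) * d := by exact_mod_cast hsum_le
  -- deduce D.card ≤ 2 k d
  have hDle : D.card ≤ 2 * k * d := by
    have h2k : (0 : ℝ) < 2 * k := by positivity
    have hnpos : (0 : ℝ) < n := by exact_mod_cast hn
    have : (D.card : ℝ) ≤ 2 * k * d := by
      rw [mul_div_assoc'] at hmain
      rw [div_le_iff₀ h2k] at hmain
      nlinarith [hmain, hnpos]
    exact_mod_cast this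
  -- triangle inequality
  have htri : hammingDist o (s w) ≤ hammingDist o c + hammingDist c (s w) :=
    hammingDist_triangle o c (s w)
  have hoc : hammingDist o c = D.card := by rw [hDcard, hammingDist_comm]
  have : hammingDist o (s w) ≤ 2 * k * d + d := by
    calc hammingDist o (s w) ≤ hammingDist o c + hammingDist c (s w) := htri
      _ ≤ 2 * k * d + d := by rw [hoc]; exact Nat.add_le_add hDle (hc w)
  have hfin : 2 * k * d + d ≤ 4 * k * d := by nlinarith [hkpos]
  exact absurd hw (not_lt.mpr (this.trans hfin))
end

section
/- For all nonnegative integers m and k, the binomial coefficient (m + k choose k) is at most 2^{2·√(m·k)}. -/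
/-!
Pascal's rule reduces the bound, by induction on `m` and `k`, to
`2^(2√((x+1)y)) + 2^(2√(x(y+1))) ≤ 2^(2√((x+1)(y+1)))`. Dividing by the right-hand side this
becomes `2^(-u) + 2^(-v) ≤ 1` with `uv ≥ 1`, and with `U = 2^(-u)` it is equivalent to
`log U · log (1 - U) ≤ (log 2)²`: the function `log U · log (1 - U)` is symmetric under
`U ↦ 1 - U` and increasing on `(0, 1/2]`, since there `U log U ≤ (1 - U) log (1 - U)`.
-/

open Real Set

lemma mul_log_le_one_sub_mul_log_one_sub {x : ℝ} (hx0 : 0 < x) (hx : x ≤ 1 / 2) :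
    x * log x ≤ (1 - x) * log (1 - x) := by
  set y := 1 - x
  have hy : 0 < y := by linarith
  have hxy : 0 ≤ y - x := by linarith
  have hratio : (y - x) / y ≤ log y - log x := by
    have := one_sub_inv_le_log_of_pos (div_pos hy hx0)
    rwa [log_div hy.ne' hx0.ne', inv_div, one_sub_div hy.ne'] at this
  have hinv : -log y ≤ x / y := by
    have := log_le_sub_one_of_pos (inv_pos.mpr hy)
    rwa [log_inv, inv_eq_one_div, div_sub_one hy.ne', show 1 - y = x by ring] at this
  calc x * log x = y * log y - x * (log y - log x) + (y - x) * -log y := by ring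
    _ ≤ y * log y - x * ((y - x) / y) + (y - x) * (x / y) := by gcongr
    _ = y * log y := by ring

lemma monotoneOn_log_mul_log_one_sub :
    MonotoneOn (fun x => log x * log (1 - x)) (Ioc 0 (1 / 2)) := by
  have hderiv : ∀ x ∈ Ioo (0 : ℝ) 1, HasDerivAt (fun x => log x * log (1 - x))
      (((1 - x) * log (1 - x) - x * log x) / (x * (1 - x))) x := by
    intro x hx
    have hx0 : x ≠ 0 := hx.1.ne'
    have hy : 1 - x ≠ 0 := by linarith [hx.2]
    have h1 : HasDerivAt (fun x => log (1 - x)) ((1 - x)⁻¹ * -1) x :=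
      (hasDerivAt_log hy).comp x ((hasDerivAt_id x).const_sub 1)
    refine ((hasDerivAt_log hx0).mul h1).congr_deriv ?_
    field_simp
    ring
  refine monotoneOn_of_hasDerivWithinAt_nonneg (convex_Ioc 0 (1 / 2))
    (f' := fun x => ((1 - x) * log (1 - x) - x * log x) / (x * (1 - x)))
    (fun x hx => (hderiv x ⟨hx.1, by linarith [hx.2]⟩).continuousAt.continuousWithinAt)
    (fun x hx => ?_) (fun x hx => ?_) <;> rw [interior_Ioc] at hx
  · exact (hderiv x ⟨hx.1, by linarith [hx.2]⟩).hasDerivWithinAt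
  · have := mul_log_le_one_sub_mul_log_one_sub hx.1 hx.2.le
    exact div_nonneg (by linarith) (mul_pos hx.1 (by linarith [hx.2])).le

lemma log_mul_log_one_sub_le {x : ℝ} (hx0 : 0 < x) (hx1 : x < 1) :
    log x * log (1 - x) ≤ log 2 ^ 2 := by
  wlog hx : x ≤ 1 / 2 generalizing x
  · have := this (x := 1 - x) (by linarith) (by linarith) (by linarith)
    rwa [sub_sub_cancel, mul_comm] at this
  calc log x * log (1 - x) ≤ log (1 / 2) * log (1 - 1 / 2) :=
        monotoneOn_log_mul_log_one_sub ⟨hx0, hx⟩ ⟨by norm_num, le_rfl⟩ hx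
    _ = log 2 ^ 2 := by rw [show (1 : ℝ) - 1 / 2 = 1 / 2 by norm_num, one_div, log_inv]; ring

lemma two_rpow_neg_add_two_rpow_neg_le_one {u v : ℝ} (hu : 0 < u) (huv : 1 ≤ u * v) :
    (2 : ℝ) ^ (-u) + (2 : ℝ) ^ (-v) ≤ 1 := by
  set U := (2 : ℝ) ^ (-u)
  have hU0 : 0 < U := by positivity
  have hU1 : U < 1 := rpow_lt_one_of_one_lt_of_neg one_lt_two (neg_lt_zero.mpr hu)
  have hlog2 : 0 < log 2 := log_pos one_lt_two
  have hv : 0 < v := pos_of_mul_pos_right (one_pos.trans_le huv) hu.le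
  have hL : log (1 - U) < 0 := log_neg (by linarith) (by linarith)
  have hQ := log_mul_log_one_sub_le hU0 hU1
  rw [log_rpow two_pos] at hQ
  have hLu : -log (1 - U) * u ≤ log 2 := by nlinarith
  have hLv : -(v * log 2) ≤ log (1 - U) := by nlinarith
  calc U + 2 ^ (-v) = U + exp (log 2 * -v) := by rw [rpow_def_of_pos two_pos]
    _ ≤ U + exp (log (1 - U)) := by gcongr; linarith
    _ = 1 := by rw [exp_log (by linarith)]; ring

lemma two_rpow_two_sqrt_pascal {x y : ℝ} (hx : 0 ≤ x) (hy : 0 ≤ y) :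
    (2 : ℝ) ^ (2 * √((x + 1) * y)) + (2 : ℝ) ^ (2 * √(x * (y + 1)))
      ≤ (2 : ℝ) ^ (2 * √((x + 1) * (y + 1))) := by
  set s := √((x + 1) * (y + 1))
  set p := √((x + 1) * y)
  set q := √(x * (y + 1))
  have hs2 : s ^ 2 = (x + 1) * (y + 1) := sq_sqrt (by positivity)
  have hp2 : p ^ 2 = (x + 1) * y := sq_sqrt (by positivity)
  have hq2 : q ^ 2 = x * (y + 1) := sq_sqrt (by positivity)
  have hp0 : 0 ≤ p := sqrt_nonneg _
  have hq0 : 0 ≤ q := sqrt_nonneg _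
  have hps : p < s := sqrt_lt_sqrt (by positivity) (by nlinarith)
  have hqs : q < s := sqrt_lt_sqrt (by positivity) (by nlinarith)
  -- `(s - p)(s + p) = x + 1` and `(s - q)(s + q) = y + 1`,
  -- so `(s - p)(s - q) = s² / ((s + p)(s + q)) ≥ 1/4`
  have hprod : 1 ≤ (2 * (s - p)) * (2 * (s - q)) := by
    have hsum : (s + p) * (s + q) ≤ 4 * s ^ 2 := by nlinarith
    have hmul : ((s - p) * (s - q)) * ((s + p) * (s + q)) = s ^ 2 := by nlinarith
    have hY : 0 < (s + p) * (s + q) := by nlinarith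
    exact le_of_mul_le_mul_right (by nlinarith) hY
  have hK := two_rpow_neg_add_two_rpow_neg_le_one (by linarith) hprod
  calc (2 : ℝ) ^ (2 * p) + 2 ^ (2 * q)
      = 2 ^ (2 * s) * (2 ^ (-(2 * (s - p))) + 2 ^ (-(2 * (s - q)))) := by
        rw [mul_add, ← rpow_add two_pos, ← rpow_add two_pos]; ring_nf
    _ ≤ 2 ^ (2 * s) := mul_le_of_le_one_right (by positivity) hK

/-- `(m+k choose k) ≤ 2^{2√(mk)}`. -/
theorem choose_le_two_pow_sqrt (m k : ℕ) :
    (((m + k).choose k : ℝ)) ≤ (2 : ℝ) ^ (2 * Real.sqrt (m * k)) := by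
  induction m generalizing k with
  | zero => simp
  | succ m ihm =>
    induction k with
    | zero => simp
    | succ k ihk =>
      have hpascal : (m + 1 + (k + 1)).choose (k + 1)
          = (m + 1 + k).choose k + (m + (k + 1)).choose (k + 1) := by
        rw [show m + 1 + (k + 1) = m + 1 + k + 1 by omega, Nat.choose_succ_succ,
          show m + 1 + k = m + (k + 1) by omega]
      rw [hpascal]
      push_cast at ihk ⊢
      calc _ ≤ (2 : ℝ) ^ (2 * √((m + 1) * k)) + 2 ^ (2 * √(m * (k + 1))) :=
            add_le_add ihk (by exact_mod_cast ihm (k + 1))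
        _ ≤ _ := two_rpow_two_sqrt_pascal m.cast_nonneg k.cast_nonneg
end

section
/- Let d be a positive integer, let p be a positive integer, and let ℓ₁, …, ℓ_p be positive integers with ℓ_i ≤ d / 2^{i-1} (as reals) for each i. Then the product ∏_{i=1}^p (2d choose ℓ_i) is at most 2^{c·d} where c = 2√2 · ∑_{i≥0} 2^{-i/2} (a fixed absolute constant); in particular ∏_{i=1}^p (2d choose ℓ_i) ≤ 2^{10 d}. -/
/-!
Since `n.choose k ≤ n ^ k / k!` and `x ^ k / k! ≤ exp x`, whenever `k ≤ x` and `n ≤ r * x` with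
`r ≥ 1` one gets `n.choose k ≤ r ^ x * exp x = (e * r) ^ x`. For `n = 2d` and `x = d / 2 ^ i` take
`r = 2 ^ (i + 1)`: as `e ≤ 4`, the `i`-th factor is at most `2 ^ ((i + 3) d / 2 ^ i)`, and
`∑ (i + 3) / 2 ^ i = 8` bounds the product by `2 ^ (8 d)`. Finally `∑ 2 ^ (-i/2) = 2 + √2`, so the
constant `2 √2 (2 + √2) = 4 √2 + 4` is at least `8`.
-/

open Real Finset

open scoped Nat

theorem Nat.cast_choose_le_exp_one_mul_rpow (n k : ℕ) {r x : ℝ} (hr : 1 ≤ r)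
    (hkx : (k : ℝ) ≤ x) (hn : (n : ℝ) ≤ r * x) : (n.choose k : ℝ) ≤ (exp 1 * r) ^ x := by
  have hx : 0 ≤ x := k.cast_nonneg.trans hkx
  calc (n.choose k : ℝ) ≤ n ^ k / k ! := Nat.choose_le_pow_div k n
    _ ≤ (r * x) ^ k / k ! := by gcongr
    _ = r ^ k * (x ^ k / k !) := by rw [mul_pow, mul_div_assoc]
    _ ≤ r ^ x * exp x := by
      gcongr
      · rw [← rpow_natCast]
        exact rpow_le_rpow_of_exponent_le hr hkx
      · exact pow_div_factorial_le_exp _ hx k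
    _ = (exp 1 * r) ^ x := by rw [mul_rpow (exp_pos 1).le (by linarith), exp_one_rpow, mul_comm]

theorem Nat.cast_choose_two_mul_le_two_rpow (d i ℓ : ℕ) (hℓ : (ℓ : ℝ) ≤ d / 2 ^ i) :
    ((2 * d).choose ℓ : ℝ) ≤ 2 ^ ((i + 3) * (d / 2 ^ i) : ℝ) := by
  have he : exp 1 * 2 ^ (i + 1) ≤ 2 ^ (i + 3) :=
    calc exp 1 * 2 ^ (i + 1) ≤ 4 * 2 ^ (i + 1) := by gcongr; linarith [exp_one_lt_d9]
      _ = 2 ^ (i + 3) := by ring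
  calc ((2 * d).choose ℓ : ℝ) ≤ (exp 1 * 2 ^ (i + 1)) ^ (d / 2 ^ i : ℝ) := by
        refine Nat.cast_choose_le_exp_one_mul_rpow _ _ (one_le_pow₀ one_le_two) hℓ (le_of_eq ?_)
        push_cast
        field_simp
        ring
    _ ≤ (2 ^ (i + 3)) ^ (d / 2 ^ i : ℝ) := by gcongr
    _ = 2 ^ ((i + 3) * (d / 2 ^ i) : ℝ) := by
        rw [← rpow_natCast_mul zero_le_two]
        push_cast
        rfl

theorem sum_range_add_three_div_two_pow (p : ℕ) :
    ∑ i ∈ range p, ((i : ℝ) + 3) / 2 ^ i = 8 - (2 * p + 8) / 2 ^ p := by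
  induction p with
  | zero => norm_num
  | succ p ih =>
    rw [sum_range_succ, ih]
    push_cast
    field_simp
    ring

theorem prod_choose_two_mul_le_two_rpow (d p : ℕ) (ℓ : Fin p → ℕ)
    (hle : ∀ i : Fin p, (ℓ i : ℝ) ≤ d / 2 ^ (i : ℕ)) :
    ((∏ i : Fin p, (2 * d).choose (ℓ i) : ℕ) : ℝ) ≤ 2 ^ (8 * d : ℝ) := by
  have hsum : ∑ i : Fin p, ((i : ℕ) + 3) * (d / 2 ^ (i : ℕ) : ℝ) ≤ 8 * d := by
    rw [Fin.sum_univ_eq_sum_range (fun i => ((i : ℝ) + 3) * (d / 2 ^ i))]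
    calc ∑ i ∈ range p, ((i : ℝ) + 3) * (d / 2 ^ i)
        = d * ∑ i ∈ range p, ((i : ℝ) + 3) / 2 ^ i := by
          rw [mul_sum]
          exact sum_congr rfl fun _ _ => by ring
      _ = d * (8 - (2 * p + 8) / 2 ^ p) := by rw [sum_range_add_three_div_two_pow]
      _ ≤ 8 * d := by
          have : (0 : ℝ) ≤ (2 * p + 8) / 2 ^ p := by positivity
          nlinarith [d.cast_nonneg (α := ℝ)]
  push_cast
  calc ∏ i : Fin p, ((2 * d).choose (ℓ i) : ℝ)
      ≤ ∏ i : Fin p, (2 : ℝ) ^ (((i : ℕ) + 3) * (d / 2 ^ (i : ℕ)) : ℝ) :=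
        prod_le_prod (fun _ _ => by positivity)
          (fun i _ => Nat.cast_choose_two_mul_le_two_rpow d i (ℓ i) (hle i))
    _ = 2 ^ (∑ i : Fin p, ((i : ℕ) + 3) * (d / 2 ^ (i : ℕ)) : ℝ) :=
        (rpow_sum_of_pos two_pos _ _).symm
    _ ≤ 2 ^ (8 * d : ℝ) := rpow_le_rpow_of_exponent_le one_le_two hsum

theorem tsum_two_rpow_neg_div_two : ∑' i : ℕ, (2 : ℝ) ^ (-(i : ℝ) / 2) = 2 + √2 := by
  have hterm (i : ℕ) : (2 : ℝ) ^ (-(i : ℝ) / 2) = (√2)⁻¹ ^ i := by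
    rw [sqrt_eq_rpow, ← rpow_neg zero_le_two, ← rpow_natCast, ← rpow_mul zero_le_two]
    ring_nf
  rw [tsum_congr hterm,
    tsum_geometric_of_lt_one (by positivity) (inv_lt_one_of_one_lt₀ one_lt_sqrt_two)]
  have hsq : √2 ^ 2 = 2 := sq_sqrt zero_le_two
  have hgt : 1 < √2 := one_lt_sqrt_two
  field_simp
  rw [div_eq_iff (sub_ne_zero.mpr hgt.ne')]
  linear_combination -hsq

theorem prod_choose_le_general
    (d p : ℕ) (ℓ : Fin p → ℕ)
    (hle : ∀ i : Fin p, (ℓ i : ℝ) ≤ (d : ℝ) / 2 ^ (i : ℕ)) :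
    ((∏ i : Fin p, (2 * d).choose (ℓ i) : ℕ) : ℝ) ≤
        (2 : ℝ) ^ ((2 * Real.sqrt 2 * ∑' i : ℕ, (2 : ℝ) ^ (-(i : ℝ) / 2)) * d) ∧
    ((∏ i : Fin p, (2 * d).choose (ℓ i) : ℕ) : ℝ) ≤ (2 : ℝ) ^ (10 * d) := by
  have hprod := prod_choose_two_mul_le_two_rpow d p ℓ hle
  have hc : (8 : ℝ) ≤ 2 * √2 * ∑' i : ℕ, (2 : ℝ) ^ (-(i : ℝ) / 2) := by
    rw [tsum_two_rpow_neg_div_two]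
    nlinarith [sq_sqrt (zero_le_two (α := ℝ)), one_lt_sqrt_two]
  refine ⟨hprod.trans (rpow_le_rpow_of_exponent_le one_le_two (by gcongr)), hprod.trans ?_⟩
  rw [← rpow_natCast]
  push_cast
  exact rpow_le_rpow_of_exponent_le one_le_two (by gcongr; norm_num)

/-- Bound on the product of binomial coefficients along the recursion tree:
if `ℓ₁,…,ℓ_p` are positive integers with `ℓ_i ≤ d / 2^(i-1)`, then
`∏ (2d choose ℓ_i) ≤ 2^(c·d)` for `c = 2√2 · ∑_{i≥0} 2^{-i/2}`, and in
particular the product is at most `2^(10d)`. -/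
theorem prod_choose_le
    (d p : ℕ) (hd : 0 < d) (hp : 0 < p) (ℓ : Fin p → ℕ)
    (hpos : ∀ i, 0 < ℓ i)
    (hle : ∀ i : Fin p, (ℓ i : ℝ) ≤ (d : ℝ) / 2 ^ (i : ℕ)) :
    ((∏ i : Fin p, (2 * d).choose (ℓ i) : ℕ) : ℝ) ≤
        (2 : ℝ) ^ ((2 * Real.sqrt 2 * ∑' i : ℕ, (2 : ℝ) ^ (-(i : ℝ) / 2)) * d) ∧
    ((∏ i : Fin p, (2 * d).choose (ℓ i) : ℕ) : ℝ) ≤ (2 : ℝ) ^ (10 * d) :=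
  prod_choose_le_general d p ℓ hle
end

section
/- Let Σ be a nonempty finite alphabet of size k, and let w be a finite word over Σ in which every symbol of Σ occurs more than k times. Then there exist pairwise disjoint factors (contiguous subwords) w₁, …, w_k of w, one for each symbol s ∈ Σ, such that the factor associated to s has length at least 2 and begins and ends with s. -/
open Finset

lemma aux_disjoint {A : Type*} [DecidableEq A] {n : ℕ} (hn : 0 < n) (w : Fin n → A) :
    ∀ (S : Finset A) (m : ℕ),
      (∀ s ∈ S, S.card < (Finset.univ.filter
          (fun i : Fin n => w i = s ∧ m ≤ (i : ℕ))).card) →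
      ∃ l r : A → Fin n,
        (∀ s ∈ S, m ≤ (l s : ℕ) ∧ l s < r s ∧ w (l s) = s ∧ w (r s) = s) ∧
        (∀ s ∈ S, ∀ t ∈ S, s ≠ t → r s < l t ∨ r t < l s) := by
  intro S
  induction S using Finset.strongInduction with
  | _ S ih =>
    intro m hS
    rcases S.eq_empty_or_nonempty with rfl | hne
    · exact ⟨fun _ => ⟨0, hn⟩, fun _ => ⟨0, hn⟩, by simp, by simp⟩
    set T : A → Finset (Fin n) := fun s => Finset.univ.filter
        (fun i : Fin n => w i = s ∧ m ≤ (i : ℕ)) with hT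
    have hcard : ∀ s ∈ S, 2 ≤ (T s).card := by
      intro s hs
      have h1 := hS s hs
      have h2 : 1 ≤ S.card := Finset.card_pos.mpr hne
      simp only [hT]
      omega
    have hTne : ∀ s ∈ S, (T s).Nonempty := by
      intro s hs
      exact Finset.card_pos.mp (by have := hcard s hs; omega)
    classical
    set l' : A → Fin n := fun s =>
      if h : (T s).Nonempty then (T s).min' h else ⟨0, hn⟩ with hl'
    have hl'mem : ∀ s ∈ S, l' s ∈ T s := by
      intro s hs
      simp only [hl', dif_pos (hTne s hs)]
      exact (T s).min'_mem _
    have hl'min : ∀ s ∈ S, ∀ i ∈ T s, l' s ≤ i := by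
      intro s hs i hi
      simp only [hl', dif_pos (hTne s hs)]
      exact (T s).min'_le i hi
    have hEne : ∀ s ∈ S, ((T s).erase (l' s)).Nonempty := by
      intro s hs
      rw [← Finset.card_pos]
      have := Finset.card_erase_of_mem (hl'mem s hs)
      have := hcard s hs
      omega
    set r' : A → Fin n := fun s =>
      if h : ((T s).erase (l' s)).Nonempty then ((T s).erase (l' s)).min' h
      else ⟨0, hn⟩ with hr'
    have hr'mem : ∀ s ∈ S, r' s ∈ (T s).erase (l' s) := by
      intro s hs
      simp only [hr', dif_pos (hEne s hs)]
      exact Finset.min'_mem _ _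
    have hr'min : ∀ s ∈ S, ∀ i ∈ (T s).erase (l' s), r' s ≤ i := by
      intro s hs i hi
      simp only [hr', dif_pos (hEne s hs)]
      exact Finset.min'_le _ i hi
    have hlr : ∀ s ∈ S, l' s < r' s := by
      intro s hs
      have h1 := hr'mem s hs
      rw [Finset.mem_erase] at h1
      exact lt_of_le_of_ne (hl'min s hs _ h1.2) (fun e => h1.1 e.symm)
    obtain ⟨s₁, hs₁, hmin⟩ := S.exists_min_image r' hne
    -- properties of s₁ factor
    have hl₁ := hl'mem s₁ hs₁
    have hr₁ : r' s₁ ∈ T s₁ := Finset.mem_of_mem_erase (hr'mem s₁ hs₁)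
    rw [hT, Finset.mem_filter] at hl₁ hr₁
    -- key: any occurrence of t ≠ s₁ at position ≤ r' s₁ equals l' t
    have key : ∀ t ∈ S, t ≠ s₁ → ∀ i ∈ T t, (i : ℕ) ≤ (r' s₁ : ℕ) → i = l' t := by
      intro t ht hts i hi hile
      by_contra hne'
      have hie : i ∈ (T t).erase (l' t) := Finset.mem_erase.mpr ⟨hne', hi⟩
      have h1 : r' t ≤ i := hr'min t ht i hie
      have h2 : (r' t : ℕ) ≤ (r' s₁ : ℕ) := le_trans h1 hile
      have h3 : r' s₁ ≤ r' t := hmin t ht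
      have h4 : r' t = r' s₁ := le_antisymm h2 h3
      have h5 : r' t ∈ T t := Finset.mem_of_mem_erase (hr'mem t ht)
      rw [hT, Finset.mem_filter] at h5
      rw [h4] at h5
      exact hts (h5.2.1.symm.trans hr₁.2.1)
    -- IH hypothesis
    have hIH : ∀ t ∈ S.erase s₁, (S.erase s₁).card <
        (Finset.univ.filter (fun i : Fin n => w i = t ∧ (r' s₁ : ℕ) + 1 ≤ (i : ℕ))).card := by
      intro t ht
      obtain ⟨hts, htS⟩ := Finset.mem_erase.mp ht
      have hsub : T t ⊆ insert (l' t)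
          (Finset.univ.filter (fun i : Fin n => w i = t ∧ (r' s₁ : ℕ) + 1 ≤ (i : ℕ))) := by
        intro i hi
        by_cases hc : (i : ℕ) ≤ (r' s₁ : ℕ)
        · exact Finset.mem_insert.mpr (Or.inl (key t htS hts i hi hc))
        · refine Finset.mem_insert.mpr (Or.inr ?_)
          rw [hT, Finset.mem_filter] at hi
          exact Finset.mem_filter.mpr ⟨Finset.mem_univ _, hi.2.1, by omega⟩
      have h1 : (T t).card ≤ _ + 1 := le_trans (Finset.card_le_card hsub)
        (Finset.card_insert_le _ _)
      have h2 := hS t htS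
      have h3 : S.card = (S.erase s₁).card + 1 := by
        rw [Finset.card_erase_of_mem hs₁]
        have : 1 ≤ S.card := Finset.card_pos.mpr hne
        omega
      simp only [hT] at h1
      omega
    obtain ⟨l, r, hmem, hdis⟩ := ih (S.erase s₁) (Finset.erase_ssubset hs₁)
      ((r' s₁ : ℕ) + 1) hIH
    refine ⟨Function.update l s₁ (l' s₁), Function.update r s₁ (r' s₁), ?_, ?_⟩
    · intro s hs
      by_cases hc : s = s₁
      · subst hc
        simp only [Function.update_self]
        exact ⟨hl₁.2.2, hlr s hs, hl₁.2.1, hr₁.2.1⟩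
      · have hsE : s ∈ S.erase s₁ := Finset.mem_erase.mpr ⟨hc, hs⟩
        obtain ⟨h1, h2, h3, h4⟩ := hmem s hsE
        simp only [Function.update_of_ne hc]
        exact ⟨by omega, h2, h3, h4⟩
    · intro s hs t ht hst
      by_cases hc : s = s₁
      · have hts : t ≠ s₁ := fun e => hst (hc.trans e.symm)
        have htE : t ∈ S.erase s₁ := Finset.mem_erase.mpr ⟨hts, ht⟩
        obtain ⟨h1, _, _, _⟩ := hmem t htE
        left
        rw [hc]
        simp only [Function.update_self, Function.update_of_ne hts]
        exact Fin.lt_def.mpr (by omega)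
      · by_cases hc2 : t = s₁
        · have hsE : s ∈ S.erase s₁ := Finset.mem_erase.mpr ⟨hc, hs⟩
          obtain ⟨h1, _, _, _⟩ := hmem s hsE
          right
          rw [hc2]
          simp only [Function.update_self, Function.update_of_ne hc]
          exact Fin.lt_def.mpr (by omega)
        · have hsE : s ∈ S.erase s₁ := Finset.mem_erase.mpr ⟨hc, hs⟩
          have htE : t ∈ S.erase s₁ := Finset.mem_erase.mpr ⟨hc2, ht⟩
          simp only [Function.update_of_ne hc, Function.update_of_ne hc2]
          exact hdis s hsE t htE hst

/-- If every symbol of a `k`-letter alphabet occurs more than `k` times in a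
word `w`, then `w` contains pairwise disjoint `s`-factors, one for each symbol
`s`: intervals `[l s, r s]` of length at least 2 beginning and ending with `s`. -/
theorem disjoint_factors_of_many_occurrences
    {A : Type*} [Fintype A] [DecidableEq A] [Nonempty A] {n : ℕ}
    (w : Fin n → A)
    (h : ∀ s : A,
      Fintype.card A < (Finset.univ.filter (fun i : Fin n => w i = s)).card) :
    ∃ l r : A → Fin n,
      (∀ s : A, l s < r s ∧ w (l s) = s ∧ w (r s) = s) ∧
      (∀ s t : A, s ≠ t → r s < l t ∨ r t < l s) := by
  have hn : 0 < n := by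
    obtain ⟨s⟩ := (inferInstance : Nonempty A)
    have := h s
    have hpos : 0 < (Finset.univ.filter (fun i : Fin n => w i = s)).card := by omega
    obtain ⟨i, -⟩ := Finset.card_pos.mp hpos
    exact i.pos
  have haux := aux_disjoint hn w Finset.univ 0 (by
    intro s _
    simpa using h s)
  obtain ⟨l, r, h1, h2⟩ := haux
  exact ⟨l, r, fun s => (h1 s (Finset.mem_univ s)).2,
    fun s t hst => h2 s (Finset.mem_univ s) t (Finset.mem_univ t) hst⟩
end

section
/- Let Σ = {a, b, c} and let w ∈ {a, b}^n contain at least one occurrence of b. Then the edit distance between x = aca · w · cac and y = cac · w · aca is strictly greater than 2. -/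
/-- Costs for the Levenshtein distance (removed from Mathlib; restored with its old meaning). -/
structure Levenshtein.Cost (α β δ : Type*) where
  delete : α → δ
  insert : β → δ
  substitute : α → β → δ

/-- The default cost: every deletion, insertion and substitution of unequal letters costs 1. -/
def Levenshtein.defaultCost {α : Type*} [DecidableEq α] : Levenshtein.Cost α α ℕ where
  delete _ := 1
  insert _ := 1
  substitute a b := if a = b then 0 else 1

/-- One step of the dynamic programming table, as in the old Mathlib. -/
def Levenshtein.impl {α β δ : Type*} [AddZeroClass δ] [Min δ] (C : Levenshtein.Cost α β δ)
    (xs : List α) (y : β) (d : {r : List δ // 0 < r.length}) :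
    {r : List δ // 0 < r.length} :=
  let ⟨ds, w⟩ := d
  xs.zip (ds.zip ds.tail) |>.foldr
    (init := ⟨[C.insert y + ds.getLast (List.length_pos_iff.mp w)], by simp⟩)
    (fun ⟨x, d₀, d₁⟩ ⟨r, w⟩ =>
      let min := min (C.delete x + r[0]) (min (C.insert y + d₀) (C.substitute x y + d₁))
      ⟨min :: r, by simp⟩)

/-- Levenshtein distances of all suffixes of `xs` to `ys`, as in the old Mathlib. -/
def suffixLevenshtein {α β δ : Type*} [AddZeroClass δ] [Min δ] (C : Levenshtein.Cost α β δ)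
    (xs : List α) (ys : List β) : {r : List δ // 0 < r.length} :=
  ys.foldr
    (Levenshtein.impl C xs)
    (xs.foldr (init := ⟨[0], by simp⟩) (fun a ⟨r, w⟩ => ⟨(C.delete a + r[0]) :: r, by simp⟩))

/-- The Levenshtein distance, as in the old Mathlib. -/
def levenshtein {α β δ : Type*} [AddZeroClass δ] [Min δ] (C : Levenshtein.Cost α β δ)
    (xs : List α) (ys : List β) : δ :=
  let ⟨r, w⟩ := suffixLevenshtein C xs ys
  r[0]

/-!
Unit-cost edit distance obeys `d(xu, yv) = min (d(u, yv) + 1) (d(xu, v) + 1) (d(u, v) + [x ≠ y])`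
and `d(xu, xv) = d(u, v)`. Unfolding this once at the front of `aca·w·cac` versus `cac·w·aca`,
each branch either mismatches two leading letters, or realigns `w` against a copy of itself
shifted by one position (insert `c` in front / delete the leading `a`). A shift costs two edits by
itself unless `w` is a constant run of the shifted letter, and an occurrence of `b` excludes
both `a` and `c`.
-/

open Levenshtein

section Recursion

variable {α β δ : Type*} [AddZeroClass δ] [Min δ] (C : Cost α β δ)

theorem Levenshtein.impl_cons {x : α} {xs : List α} {y : β} {d : δ} {ds : List δ}
    (w : 0 < (d :: ds).length) (w' : 0 < ds.length) :
    impl C (x :: xs) y ⟨d :: ds, w⟩ =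
      ⟨min (C.delete x + (impl C xs y ⟨ds, w'⟩).1[0]'(impl C xs y ⟨ds, w'⟩).2)
        (min (C.insert y + d) (C.substitute x y + ds[0])) :: (impl C xs y ⟨ds, w'⟩).1,
        by simp⟩ :=
  match ds, w' with | _ :: _, _ => rfl

theorem Levenshtein.impl_length {xs : List α} {y : β} (d : {r : List δ // 0 < r.length})
    (w : d.1.length = xs.length + 1) :
    (impl C xs y d).1.length = xs.length + 1 := by
  induction xs generalizing d with
  | nil => rfl
  | cons x xs ih =>
    match d, w with
    | ⟨d₁ :: d₂ :: ds, _⟩, w =>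
      rw [impl_cons C (by simp) (by simp)]
      simpa using ih ⟨d₂ :: ds, by simp⟩ (by simpa using w)

theorem suffixLevenshtein_length (xs : List α) (ys : List β) :
    (suffixLevenshtein C xs ys).1.length = xs.length + 1 := by
  induction ys with
  | nil =>
    induction xs with
    | nil => rfl
    | cons _ xs ih => simp_all [suffixLevenshtein]
  | cons y ys ih => exact impl_length C _ ih

theorem suffixLevenshtein_cons_right (xs : List α) (y : β) (ys : List β) :
    suffixLevenshtein C xs (y :: ys) = impl C xs y (suffixLevenshtein C xs ys) := rfl

theorem levenshtein_eq_getElem_zero (xs : List α) (ys : List β) :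
    levenshtein C xs ys = (suffixLevenshtein C xs ys).1[0]'(suffixLevenshtein C xs ys).2 := rfl

theorem suffixLevenshtein_cons_left (x : α) (xs : List α) (ys : List β) :
    suffixLevenshtein C (x :: xs) ys =
      ⟨levenshtein C (x :: xs) ys :: (suffixLevenshtein C xs ys).1, by simp⟩ := by
  induction ys with
  | nil => rfl
  | cons y ys ih =>
    have hl := suffixLevenshtein_length C xs ys
    have htail : (suffixLevenshtein C (x :: xs) (y :: ys)).1.tail =
        (suffixLevenshtein C xs (y :: ys)).1 := by
      rw [suffixLevenshtein_cons_right, ih, impl_cons C (by simp) (by omega)]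
      rfl
    rw [levenshtein_eq_getElem_zero]
    generalize suffixLevenshtein C (x :: xs) (y :: ys) = s at htail ⊢
    obtain ⟨_ | ⟨r₀, r⟩, hr⟩ := s
    · simp at hr
    · subst htail; rfl

theorem levenshtein_nil_cons (y : β) (ys : List β) :
    levenshtein C ([] : List α) (y :: ys) = C.insert y + levenshtein C [] ys := by
  rw [levenshtein_eq_getElem_zero, levenshtein_eq_getElem_zero, suffixLevenshtein_cons_right]
  have hl := suffixLevenshtein_length C ([] : List α) ys
  generalize suffixLevenshtein C ([] : List α) ys = s at hl ⊢
  obtain ⟨_ | ⟨a, _ | _⟩, _⟩ := s <;> simp at hl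
  rfl

theorem levenshtein_cons_nil (x : α) (xs : List α) :
    levenshtein C (x :: xs) ([] : List β) = C.delete x + levenshtein C xs [] := rfl

theorem levenshtein_cons_cons (x : α) (xs : List α) (y : β) (ys : List β) :
    levenshtein C (x :: xs) (y :: ys) =
      min (C.delete x + levenshtein C xs (y :: ys))
        (min (C.insert y + levenshtein C (x :: xs) ys)
          (C.substitute x y + levenshtein C xs ys)) := by
  rw [levenshtein_eq_getElem_zero, suffixLevenshtein_cons_right, suffixLevenshtein_cons_left]
  have hl := suffixLevenshtein_length C xs ys
  rw [impl_cons C (by simp) (by omega)]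
  rfl

end Recursion

section UnitCost

variable {α : Type*} [DecidableEq α]

@[simp] theorem levenshtein_defaultCost_nil_cons (y : α) (v : List α) :
    levenshtein defaultCost [] (y :: v) = levenshtein defaultCost [] v + 1 := by
  rw [levenshtein_nil_cons, add_comm]; rfl

@[simp] theorem levenshtein_defaultCost_cons_nil (x : α) (u : List α) :
    levenshtein defaultCost (x :: u) [] = levenshtein defaultCost u [] + 1 := by
  rw [levenshtein_cons_nil, add_comm]; rfl

theorem levenshtein_defaultCost_cons_cons (x y : α) (u v : List α) :
    levenshtein defaultCost (x :: u) (y :: v) =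
      min (levenshtein defaultCost u (y :: v) + 1)
        (min (levenshtein defaultCost (x :: u) v + 1)
          (levenshtein defaultCost u v + if x = y then 0 else 1)) := by
  rw [levenshtein_cons_cons]
  simp only [defaultCost, add_comm]

theorem levenshtein_defaultCost_pos {u v : List α} (h : u ≠ v) :
    0 < levenshtein defaultCost u v := by
  induction u generalizing v with
  | nil => cases v with
    | nil => exact absurd rfl h
    | cons y v => simp
  | cons x u ih => cases v with
    | nil => simp
    | cons y v =>
      rw [levenshtein_defaultCost_cons_cons]
      by_cases hxy : x = y
      · subst hxy
        have := ih (v := v) (by simpa using h)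
        simp [this]
      · simp [hxy]

theorem levenshtein_defaultCost_cons_left_le (x : α) (u v : List α) :
    levenshtein defaultCost (x :: u) v ≤ levenshtein defaultCost u v + 1 := by
  cases v with
  | nil => simp
  | cons y v => rw [levenshtein_defaultCost_cons_cons]; exact min_le_left _ _

theorem levenshtein_defaultCost_cons_right_le (y : α) (u v : List α) :
    levenshtein defaultCost u (y :: v) ≤ levenshtein defaultCost u v + 1 := by
  cases u with
  | nil => simp
  | cons x u =>
    rw [levenshtein_defaultCost_cons_cons]
    exact (min_le_right _ _).trans (min_le_left _ _)

theorem levenshtein_defaultCost_le_cons_left (x : α) (u v : List α) :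
    levenshtein defaultCost u v ≤ levenshtein defaultCost (x :: u) v + 1 := by
  induction v with
  | nil => rw [levenshtein_defaultCost_cons_nil]; omega
  | cons y v ih =>
    have h₁ := levenshtein_defaultCost_cons_right_le y u v
    rw [levenshtein_defaultCost_cons_cons]
    split_ifs <;> omega

theorem levenshtein_defaultCost_le_cons_right (y : α) (u v : List α) :
    levenshtein defaultCost u v ≤ levenshtein defaultCost u (y :: v) + 1 := by
  induction u with
  | nil => rw [levenshtein_defaultCost_nil_cons]; omega
  | cons x u ih =>
    have h₁ := levenshtein_defaultCost_cons_left_le x u v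
    rw [levenshtein_defaultCost_cons_cons]
    split_ifs <;> omega

theorem levenshtein_defaultCost_cons_cons_self (x : α) (u v : List α) :
    levenshtein defaultCost (x :: u) (x :: v) = levenshtein defaultCost u v := by
  have h₁ := levenshtein_defaultCost_le_cons_right x u v
  have h₂ := levenshtein_defaultCost_le_cons_left x u v
  rw [levenshtein_defaultCost_cons_cons, if_pos rfl]
  omega

theorem levenshtein_defaultCost_comm (u v : List α) :
    levenshtein defaultCost u v = levenshtein defaultCost v u := by
  induction u generalizing v with
  | nil => induction v with
    | nil => rfl
    | cons y v ih => simp [ih]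
  | cons x u ih => induction v with
    | nil => simp [ih]
    | cons y v ih' =>
      rw [levenshtein_defaultCost_cons_cons, levenshtein_defaultCost_cons_cons, ih, ih', ih v]
      simp only [eq_comm (a := x)]
      omega

-- Unless a second edit intervenes, aligning `a :: v` with `v` forces every letter of `v` to be `a`.
theorem two_le_levenshtein_defaultCost_cons_append (a : α) {v s t : List α}
    (hv : ∃ b ∈ v, b ≠ a) (hst : s ≠ t) (hlen : s.length = t.length) :
    2 ≤ levenshtein defaultCost (a :: (v ++ s)) (v ++ t) := by
  induction v with
  | nil => simp at hv
  | cons b v ih =>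
    simp only [List.cons_append]
    rw [levenshtein_defaultCost_cons_cons, levenshtein_defaultCost_cons_cons_self]
    have h_same : 0 < levenshtein defaultCost (v ++ s) (v ++ t) :=
      levenshtein_defaultCost_pos (by simpa using hst)
    have h_insert : 0 < levenshtein defaultCost (a :: b :: (v ++ s)) (v ++ t) :=
      levenshtein_defaultCost_pos (mt (congrArg List.length) (by simp [hlen]; omega))
    have h_shift : 2 ≤ levenshtein defaultCost (b :: (v ++ s)) (v ++ t) +
        if a = b then 0 else 1 := by
      split_ifs with hab
      · subst hab
        obtain ⟨c, hc, hca⟩ := hv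
        exact ih ⟨c, (List.mem_cons.mp hc).resolve_left hca, hca⟩
      · have := levenshtein_defaultCost_pos (u := b :: (v ++ s)) (v := v ++ t)
          (mt (congrArg List.length) (by simp [hlen]))
        omega
    omega

end UnitCost

theorem gadget_editDistance_gt_two_general (w : List (Fin 3))
    (hb : (1 : Fin 3) ∈ w) :
    2 < levenshtein Levenshtein.defaultCost
      ([0, 2, 0] ++ w ++ [2, 0, 2])
      ([2, 0, 2] ++ w ++ [0, 2, 0]) := by
  have shift_a : 2 ≤ levenshtein defaultCost (0 :: (w ++ [2, 0, 2])) (w ++ [0, 2, 0]) :=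
    two_le_levenshtein_defaultCost_cons_append 0 ⟨1, hb, by decide⟩ (by decide) rfl
  have shift_c : 2 ≤ levenshtein defaultCost (w ++ [2, 0, 2]) (2 :: (w ++ [0, 2, 0])) := by
    rw [levenshtein_defaultCost_comm]
    exact two_le_levenshtein_defaultCost_cons_append 2 ⟨1, hb, by decide⟩ (by decide) rfl
  have mismatch : 0 < levenshtein defaultCost (0 :: (w ++ [2, 0, 2])) (2 :: (w ++ [0, 2, 0])) :=
    levenshtein_defaultCost_pos (by simp)
  simp only [List.cons_append, List.nil_append]
  rw [levenshtein_defaultCost_cons_cons, levenshtein_defaultCost_cons_cons (x := 2) (y := 0),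
    if_neg (by decide), if_neg (by decide)]
  simp only [levenshtein_defaultCost_cons_cons_self]
  omega

/-- If `w ∈ {a,b}^n` contains at least one `b`, then the edit distance between
`aca·w·cac` and `cac·w·aca` is strictly greater than `2`. Here the alphabet is
`Fin 3` with `a = 0`, `b = 1`, `c = 2`. -/
theorem gadget_editDistance_gt_two (w : List (Fin 3))
    (hw : ∀ ch ∈ w, ch = 0 ∨ ch = 1) (hb : (1 : Fin 3) ∈ w) :
    2 < levenshtein Levenshtein.defaultCost
      ([0, 2, 0] ++ w ++ [2, 0, 2])
      ([2, 0, 2] ++ w ++ [0, 2, 0]) :=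
  gadget_editDistance_gt_two_general w hb
end
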